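/- arXiv:2212.06337 — 2 statements merged into one kernel-verified Lean document; each statement's English description precedes it below -/
import Mathlib

section
/- Let $|q|<1$, $p \geq 1$ an integer, and for $n \geq 1$ define the sums $S_n = \sum_{k=-n}^{n} \frac{(-1)^k q^{(p+1/2)k^2 - k/2}}{(q;q)_{n-k}(q;q)_{n+k}}$ and $T_n = \sum_{k=-n+1}^{n} \frac{(-1)^k q^{(p+1/2)k^2 - k/2}}{(q;q)_{n-k}(q;q)_{n+k-1}}$. Then $(1-q^n) S_n = T_n$. -/
/-!
Let `t k` be the `k`-th summand of `S_n`. Since `(q;q)_{n+k} = (q;q)_{n+k-1} (1 - q^{n+k})`, the sum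
`T_n` equals `∑ (1 - q^{n+k}) t k` over `-n ≤ k ≤ n`, the new term `k = -n` being zero. The claim thus
reduces to `∑ q^{n+k} t k = q^n ∑ t k`, and this holds because `t (-k) = q^k t k` makes the summands
`(q^{n+k} - q^n) t k` odd in `k`.
-/

/-- The q-Pochhammer symbol `(q; q)_n`. -/
def qPoch (q : ℂ) (n : ℕ) : ℂ := ∏ j ∈ Finset.range n, (1 - q ^ (j + 1))

open Finset

theorem sum_Icc_pow_toNat_add_mul_eq_pow_mul_sum {R : Type*} [CommRing R] (f : ℤ → R) (x : R)
    (n : ℕ) (hf : ∀ k : ℕ, f (-k) = x ^ k * f k) :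
    ∑ k ∈ Icc (-(n : ℤ)) n, x ^ ((n : ℤ) + k).toNat * f k =
      x ^ n * ∑ k ∈ Icc (-(n : ℤ)) n, f k := by
  rw [mul_sum, ← sub_eq_zero, ← sum_sub_distrib]
  set g : ℤ → R := fun k => x ^ ((n : ℤ) + k).toNat * f k - x ^ n * f k
  have hpair (m : ℕ) (hm : m ≤ n) : g m + g (-m) = 0 := by
    have hpow : x ^ (n - m) * x ^ m = x ^ n := by rw [← pow_add, Nat.sub_add_cancel hm]
    simp only [g, hf, show ((n : ℤ) + m).toNat = n + m by omega,
      show ((n : ℤ) + -m).toNat = n - m by omega, pow_add]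
    linear_combination (f m) * hpow
  refine sum_involution (fun k _ => -k) (fun k hk => ?_) (fun k _ hk => ?_) (fun k hk => ?_)
    (fun k _ => neg_neg k)
  · obtain ⟨m, rfl | rfl⟩ := k.eq_nat_or_neg <;> rw [mem_Icc] at hk
    · exact hpair m (by omega)
    · rw [neg_neg, add_comm]; exact hpair m (by omega)
  · rintro h
    obtain rfl : k = 0 := by omega
    simp at hk
  · rw [mem_Icc] at hk ⊢; omega

theorem one_sub_pow_ne_zero {q : ℂ} (hq : ‖q‖ < 1) {j : ℕ} (hj : j ≠ 0) : 1 - q ^ j ≠ 0 := by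
  refine sub_ne_zero.mpr fun h => ?_
  have : ‖q‖ ^ j < 1 := pow_lt_one₀ (norm_nonneg q) hq hj
  rw [← norm_pow, ← h, norm_one] at this
  exact this.false

theorem qPoch_succ (q : ℂ) (m : ℕ) : qPoch q (m + 1) = qPoch q m * (1 - q ^ (m + 1)) :=
  prod_range_succ _ _

theorem one_sub_pow_mul_div_mul_qPoch_succ {q : ℂ} (hq : ‖q‖ < 1) (a b : ℂ) (m : ℕ) :
    (1 - q ^ (m + 1)) * (a / (b * qPoch q (m + 1))) = a / (b * qPoch q m) := by
  rw [qPoch_succ, ← mul_assoc, mul_div_assoc', mul_comm _ a,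
    mul_div_mul_right _ _ (one_sub_pow_ne_zero hq m.succ_ne_zero)]

theorem neg_one_zpow_mul_zpow_neg {K : Type*} [Field K] (q : K) (p k : ℕ) :
    (-1 : K) ^ (-(k : ℤ)) * q ^ (((2 * p + 1) * (-(k : ℤ)) ^ 2 - -(k : ℤ)) / 2) =
      q ^ k * ((-1 : K) ^ (k : ℤ) * q ^ (((2 * p + 1) * (k : ℤ) ^ 2 - k) / 2)) := by
  have hexp : ((2 * p + 1) * (-(k : ℤ)) ^ 2 - -(k : ℤ)) / 2 =
      ((2 * p + 1) * (k : ℤ) ^ 2 - k) / 2 + k := by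
    rw [neg_sq, sub_neg_eq_add, ← Int.add_mul_ediv_right _ _ two_ne_zero]; ring_nf
  have hnonneg : 0 ≤ ((2 * p + 1) * (k : ℤ) ^ 2 - k) / 2 := by
    have hk : (k : ℤ) ≤ k ^ 2 := by exact_mod_cast Nat.le_self_pow two_ne_zero k
    exact Int.ediv_nonneg (by nlinarith [mul_nonneg p.cast_nonneg (sq_nonneg (k : ℤ))]) two_pos.le
  -- `q` may be zero: `zpow_add'` adds the exponents because both are nonnegative.
  rw [hexp, zpow_add' (Or.inr (by omega)), zpow_natCast, zpow_neg, zpow_natCast,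
    ← inv_pow, inv_neg_one]
  ring

theorem auxiliary1_general (q : ℂ) (hq : ‖q‖ < 1) (p : ℕ) (n : ℕ) :
    (1 - q ^ n) * ∑ k ∈ Finset.Icc (-(n : ℤ)) n,
        (-1 : ℂ) ^ k * q ^ (((2 * p + 1) * k ^ 2 - k) / 2) /
          (qPoch q ((n : ℤ) - k).toNat * qPoch q ((n : ℤ) + k).toNat) =
      ∑ k ∈ Finset.Icc (-(n : ℤ) + 1) n,
        (-1 : ℂ) ^ k * q ^ (((2 * p + 1) * k ^ 2 - k) / 2) /
          (qPoch q ((n : ℤ) - k).toNat * qPoch q ((n : ℤ) + k - 1).toNat) := by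
  set t : ℤ → ℂ := fun k => (-1 : ℂ) ^ k * q ^ (((2 * p + 1) * k ^ 2 - k) / 2) /
    (qPoch q ((n : ℤ) - k).toNat * qPoch q ((n : ℤ) + k).toNat)
  have ht_neg (k : ℕ) : t (-k) = q ^ k * t k := by
    simp only [t]
    rw [neg_one_zpow_mul_zpow_neg, sub_neg_eq_add, ← sub_eq_add_neg,
      mul_comm (qPoch q ((n : ℤ) + k).toNat), mul_div_assoc]
  have hT : ∑ k ∈ Icc (-(n : ℤ)) n, (1 - q ^ ((n : ℤ) + k).toNat) * t k =
      ∑ k ∈ Icc (-(n : ℤ) + 1) n,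
        (-1 : ℂ) ^ k * q ^ (((2 * p + 1) * k ^ 2 - k) / 2) /
          (qPoch q ((n : ℤ) - k).toNat * qPoch q ((n : ℤ) + k - 1).toNat) := by
    rw [← Ioc_insert_left (by omega), sum_insert left_notMem_Ioc, add_neg_cancel, Int.toNat_zero,
      pow_zero, sub_self, zero_mul, zero_add, ← Icc_add_one_left_eq_Ioc]
    refine sum_congr rfl fun k hk => ?_
    rw [mem_Icc] at hk
    simp only [t]
    rw [show ((n : ℤ) + k).toNat = ((n : ℤ) + k - 1).toNat + 1 by omega,
      one_sub_pow_mul_div_mul_qPoch_succ hq]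
  rw [← hT]
  simp only [sub_mul, one_mul, sum_sub_distrib,
    sum_Icc_pow_toNat_add_mul_eq_pow_mul_sum t q n ht_neg]

theorem auxiliary1 (q : ℂ) (hq : ‖q‖ < 1) (p : ℕ) (hp : 1 ≤ p) (n : ℕ) (hn : 1 ≤ n) :
    (1 - q ^ n) * ∑ k ∈ Finset.Icc (-(n : ℤ)) n,
        (-1 : ℂ) ^ k * q ^ (((2 * p + 1) * k ^ 2 - k) / 2) /
          (qPoch q ((n : ℤ) - k).toNat * qPoch q ((n : ℤ) + k).toNat) =
      ∑ k ∈ Finset.Icc (-(n : ℤ) + 1) n,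
        (-1 : ℂ) ^ k * q ^ (((2 * p + 1) * k ^ 2 - k) / 2) /
          (qPoch q ((n : ℤ) - k).toNat * qPoch q ((n : ℤ) + k - 1).toNat) :=
  auxiliary1_general q hq p n
end

section
/- Let $|q|<1$, $p \geq 1$ an integer, and for $n \geq 1$ define $S_n = \sum_{k=-n-1}^{n} \frac{(-1)^k q^{(p+1/2)k^2+(p-1/2)k}}{(q;q)_{n-k}(q;q)_{n+k+1}}$ and $T_n = \sum_{k=-n+1}^{n} \frac{(-1)^k q^{(p+1/2)k^2+(p-1/2)k}}{(q;q)_{n-k}(q;q)_{n+k-1}}$. Then $(1-q^{2n}) S_n = T_n$. -/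
/-!
Write `a_k = (-1)^k q^{(p+1/2)k^2+(p-1/2)k}`. The involution `k ↦ -1 - k` of `[-n-1, n]` swaps the
two Pochhammer indices `n - k` and `n + k + 1` of `S_n` and sends `a_k` to `-q^{2k+1} a_k`.
With the convention `1/(q;q)_m = 0` for `m < 0`, the sum `T_n` may also be taken over `[-n-1, n]`
and `1/(q;q)_{m-2} = (1 - q^{m-1})(1 - q^m)/(q;q)_m` holds for every `m ≥ 0`. Pairing `k` with
`-1 - k` then reduces the claim, for each `0 ≤ k ≤ n`, to the polynomial identity
`(1 - q^{2n})(1 - q^{2k+1}) = (1 - q^{n+k})(1 - q^{n+k+1}) - q^{2k+1}(1 - q^{n-k-1})(1 - q^{n-k})`.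
-/

open Finset

theorem Finset.sum_Icc_neg_sub_one_eq_sum_range {M : Type*} [AddCommMonoid M] (f : ℤ → M)
    (N : ℕ) : ∑ k ∈ Icc (-(N : ℤ) - 1) N, f k = ∑ k ∈ range (N + 1), (f k + f (-1 - k)) := by
  induction N with
  | zero =>
    rw [show Icc (-((0 : ℕ) : ℤ) - 1) (0 : ℕ) = {0, -1} by
      ext k; simp only [mem_Icc, mem_insert, mem_singleton]; omega]
    simp
  | succ N ih =>
    have hIcc : Icc (-((N + 1 : ℕ) : ℤ) - 1) (N + 1 : ℕ) =
        insert ((N + 1 : ℕ) : ℤ) (insert (-1 - ((N + 1 : ℕ) : ℤ)) (Icc (-(N : ℤ) - 1) N)) := by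
      ext k; simp only [mem_Icc, mem_insert]; omega
    rw [hIcc, sum_insert (by simp; omega), sum_insert (by simp; omega), ih,
      sum_range_succ _ (N + 1)]
    abel

section qPochInv

variable {q : ℂ}

theorem one_sub_pow_ne_zero_of_not_isOfFinOrder (hq : ¬IsOfFinOrder q) {j : ℕ} (hj : j ≠ 0) :
    1 - q ^ j ≠ 0 :=
  sub_ne_zero.2 fun h => hq (isOfFinOrder_iff_pow_eq_one.2 ⟨j, Nat.pos_of_ne_zero hj, h.symm⟩)

noncomputable def qPochInv (q : ℂ) (j : ℤ) : ℂ := if 0 ≤ j then (qPoch q j.toNat)⁻¹ else 0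

theorem qPochInv_of_nonneg {j : ℤ} (hj : 0 ≤ j) : qPochInv q j = (qPoch q j.toNat)⁻¹ :=
  if_pos hj

theorem qPochInv_of_neg {j : ℤ} (hj : j < 0) : qPochInv q j = 0 :=
  if_neg hj.not_ge

theorem qPochInv_natCast (j : ℕ) : qPochInv q j = (qPoch q j)⁻¹ :=
  qPochInv_of_nonneg (Int.natCast_nonneg j)

theorem qPochInv_natCast_sub_one (hq : ¬IsOfFinOrder q) (j : ℕ) :
    qPochInv q (j - 1) = (1 - q ^ j) * qPochInv q j := by
  rcases j with _ | j
  · simp [qPochInv_of_neg]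
  · rw [show ((j + 1 : ℕ) : ℤ) - 1 = (j : ℕ) by push_cast; ring, qPochInv_natCast,
      qPochInv_natCast, qPoch, qPoch, prod_range_succ, mul_inv, mul_left_comm,
      mul_inv_cancel₀ (one_sub_pow_ne_zero_of_not_isOfFinOrder hq j.succ_ne_zero), mul_one]

theorem qPochInv_reflect_pair (hq : ¬IsOfFinOrder q) (w : ℂ) {k n : ℕ} (hk : k ≤ n) :
    (1 - q ^ (2 * n)) * (w * qPochInv q (n - k) * qPochInv q (n + k + 1) +
        -q ^ (2 * k + 1) * w * qPochInv q (n - (-1 - k)) * qPochInv q (n + (-1 - k) + 1)) =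
      w * qPochInv q (n - k) * qPochInv q (n + k - 1) +
        -q ^ (2 * k + 1) * w * qPochInv q (n - (-1 - k)) * qPochInv q (n + (-1 - k) - 1) := by
  obtain ⟨m, rfl⟩ := Nat.exists_eq_add_of_le hk
  have hl : qPochInv q ((k + m : ℕ) + k - 1) =
      (1 - q ^ (2 * k + m)) * (1 - q ^ (2 * k + m + 1)) * qPochInv q (2 * k + m + 1 : ℕ) := by
    rw [show ((k + m : ℕ) : ℤ) + k - 1 = (2 * k + m : ℕ) - 1 by push_cast; ring,
      qPochInv_natCast_sub_one hq,
      show ((2 * k + m : ℕ) : ℤ) = (2 * k + m + 1 : ℕ) - 1 by push_cast; ring,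
      qPochInv_natCast_sub_one hq]
    push_cast; ring
  rw [hl, show ((k + m : ℕ) : ℤ) - (-1 - k) = (2 * k + m + 1 : ℕ) by push_cast; ring,
    show ((k + m : ℕ) : ℤ) + k + 1 = (2 * k + m + 1 : ℕ) by push_cast; ring,
    show ((k + m : ℕ) : ℤ) + (-1 - k) + 1 = (m : ℕ) by push_cast; ring,
    show ((k + m : ℕ) : ℤ) - k = (m : ℕ) by push_cast; ring]
  rcases m with _ | j
  · rw [show ((k + 0 : ℕ) : ℤ) + (-1 - k) - 1 = -2 by push_cast; ring,
      qPochInv_of_neg (j := -2) (by norm_num)]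
    ring
  · have hm : qPochInv q ((k + (j + 1) : ℕ) + (-1 - k) - 1) =
        (1 - q ^ j) * (1 - q ^ (j + 1)) * qPochInv q (j + 1 : ℕ) := by
      rw [show ((k + (j + 1) : ℕ) : ℤ) + (-1 - k) - 1 = (j : ℕ) - 1 by push_cast; ring,
        qPochInv_natCast_sub_one hq, mul_assoc,
        show ((j : ℕ) : ℤ) = (j + 1 : ℕ) - 1 by push_cast; ring, qPochInv_natCast_sub_one hq]
    rw [hm]
    ring

theorem div_qPoch_mul_qPoch (x : ℂ) {i j : ℤ} (hi : 0 ≤ i) (hj : 0 ≤ j) :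
    x / (qPoch q i.toNat * qPoch q j.toNat) = x * qPochInv q i * qPochInv q j := by
  rw [qPochInv_of_nonneg hi, qPochInv_of_nonneg hj, mul_assoc, ← mul_inv, div_eq_mul_inv]

theorem sum_qPochInv_reflect (hq : ¬IsOfFinOrder q) (a : ℤ → ℂ)
    (ha : ∀ k : ℕ, a (-1 - k) = -q ^ (2 * k + 1) * a k) (n : ℕ) :
    (1 - q ^ (2 * n)) *
        ∑ k ∈ Icc (-(n : ℤ) - 1) n, a k * qPochInv q (n - k) * qPochInv q (n + k + 1) =
      ∑ k ∈ Icc (-(n : ℤ) - 1) n, a k * qPochInv q (n - k) * qPochInv q (n + k - 1) := by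
  rw [sum_Icc_neg_sub_one_eq_sum_range, sum_Icc_neg_sub_one_eq_sum_range, mul_sum]
  refine sum_congr rfl fun k hk => ?_
  rw [ha]
  exact qPochInv_reflect_pair hq (a k) (Nat.lt_succ_iff.1 (mem_range.1 hk))

end qPochInv

noncomputable def thetaCoeff (q : ℂ) (p : ℕ) (k : ℤ) : ℂ :=
  (-1) ^ k * q ^ (((2 * p + 1) * k ^ 2 + (2 * p - 1) * k) / 2)

theorem thetaCoeff_neg_one_sub (q : ℂ) (p k : ℕ) :
    thetaCoeff q p (-1 - k) = -q ^ (2 * k + 1) * thetaCoeff q p k := by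
  have hexp : ((2 * p + 1) * (-1 - (k : ℤ)) ^ 2 + (2 * p - 1) * (-1 - k)) / 2 =
      ((2 * p + 1) * (k : ℤ) ^ 2 + (2 * p - 1) * k) / 2 + (2 * k + 1 : ℕ) := by
    rw [← Int.add_mul_ediv_right _ _ two_ne_zero]
    push_cast; ring_nf
  have hnonneg : 0 ≤ ((2 * p + 1) * (k : ℤ) ^ 2 + (2 * p - 1) * k) / 2 :=
    have hk : (k : ℤ) ≤ k ^ 2 := by exact_mod_cast Nat.le_self_pow two_ne_zero k
    Int.ediv_nonneg (by nlinarith [Int.natCast_nonneg p, Int.natCast_nonneg k]) zero_le_two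
  have hsign : (-1 : ℂ) ^ (-1 - (k : ℤ)) = -(-1) ^ (k : ℤ) := by
    rw [show -1 - (k : ℤ) = -((k + 1 : ℕ) : ℤ) by push_cast; ring, zpow_neg, zpow_natCast,
      zpow_natCast, ← inv_pow, inv_neg_one, pow_succ]
    ring
  rw [thetaCoeff, thetaCoeff, hexp, zpow_add' (Or.inr (Or.inl (by omega))), hsign]
  simp only [zpow_natCast]
  ring

theorem auxiliary3_general (q : ℂ) (hq : ‖q‖ < 1) (p : ℕ) (n : ℕ) :
    (1 - q ^ (2 * n)) * ∑ k ∈ Finset.Icc (-(n : ℤ) - 1) n,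
        (-1 : ℂ) ^ k * q ^ (((2 * p + 1) * k ^ 2 + (2 * p - 1) * k) / 2) /
          (qPoch q ((n : ℤ) - k).toNat * qPoch q ((n : ℤ) + k + 1).toNat) =
      ∑ k ∈ Finset.Icc (-(n : ℤ) + 1) n,
        (-1 : ℂ) ^ k * q ^ (((2 * p + 1) * k ^ 2 + (2 * p - 1) * k) / 2) /
          (qPoch q ((n : ℤ) - k).toNat * qPoch q ((n : ℤ) + k - 1).toNat) := by
  have hS : ∀ k ∈ Icc (-(n : ℤ) - 1) n,
      thetaCoeff q p k / (qPoch q ((n : ℤ) - k).toNat * qPoch q ((n : ℤ) + k + 1).toNat) =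
        thetaCoeff q p k * qPochInv q (n - k) * qPochInv q (n + k + 1) := fun k hk => by
    rw [mem_Icc] at hk
    exact div_qPoch_mul_qPoch _ (by omega) (by omega)
  have hT : ∀ k ∈ Icc (-(n : ℤ) + 1) n,
      thetaCoeff q p k / (qPoch q ((n : ℤ) - k).toNat * qPoch q ((n : ℤ) + k - 1).toNat) =
        thetaCoeff q p k * qPochInv q (n - k) * qPochInv q (n + k - 1) := fun k hk => by
    rw [mem_Icc] at hk
    exact div_qPoch_mul_qPoch _ (by omega) (by omega)
  have hT_vanish : ∀ k ∈ Icc (-(n : ℤ) - 1) n, k ∉ Icc (-(n : ℤ) + 1) n →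
      thetaCoeff q p k * qPochInv q (n - k) * qPochInv q (n + k - 1) = 0 := fun k hk hk' => by
    simp only [mem_Icc] at hk hk'
    rw [qPochInv_of_neg (j := n + k - 1) (by omega), mul_zero]
  change (1 - q ^ (2 * n)) * ∑ k ∈ Icc (-(n : ℤ) - 1) n, thetaCoeff q p k / _ =
    ∑ k ∈ Icc (-(n : ℤ) + 1) n, thetaCoeff q p k / _
  rw [sum_congr rfl hS, sum_congr rfl hT,
    sum_subset (Icc_subset_Icc (by omega) le_rfl) hT_vanish]
  exact sum_qPochInv_reflect (fun h => hq.ne h.norm_eq_one) _ (thetaCoeff_neg_one_sub q p) n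

theorem auxiliary3 (q : ℂ) (hq : ‖q‖ < 1) (p : ℕ) (hp : 1 ≤ p) (n : ℕ) (hn : 1 ≤ n) :
    (1 - q ^ (2 * n)) * ∑ k ∈ Finset.Icc (-(n : ℤ) - 1) n,
        (-1 : ℂ) ^ k * q ^ (((2 * p + 1) * k ^ 2 + (2 * p - 1) * k) / 2) /
          (qPoch q ((n : ℤ) - k).toNat * qPoch q ((n : ℤ) + k + 1).toNat) =
      ∑ k ∈ Finset.Icc (-(n : ℤ) + 1) n,
        (-1 : ℂ) ^ k * q ^ (((2 * p + 1) * k ^ 2 + (2 * p - 1) * k) / 2) /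
          (qPoch q ((n : ℤ) - k).toNat * qPoch q ((n : ℤ) + k - 1).toNat) :=
  auxiliary3_general q hq p n
end
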